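/- arXiv:1601.05784 — 5 statements merged into one kernel-verified Lean document; each statement's English description precedes it below -/
import Mathlib

section
/- Let F be an n×n Hermitian positive semidefinite matrix whose eigenvalues are all ≥ 1, with at most m of them exceeding 1 (where k ≤ m ≤ n). Then the average of the k×k principal minors satisfies (1/C(n,k)) · Σ_{|Λ|=k} det(F_Λ) ≥ (C(m,k)/C(n,k)) · (det F)^{k/m}. -/
open Matrix
open scoped ComplexOrder

open Polynomial

variable {ι R : Type*} [Fintype ι] [DecidableEq ι] [CommRing R]

lemma aux1 (M : Matrix ι ι R) (s : Finset ι) :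
    (Matrix.of (s.piecewise (fun i j => M i j) (fun i j => (1 : Matrix ι ι R) i j))).det
      = (M.submatrix (fun i : {x : ι // x ∈ s} => (i : ι))
          (fun j : {x : ι // x ∈ s} => (j : ι))).det := by
  classical
  set N := Matrix.of (s.piecewise (fun i j => M i j) (fun i j => (1 : Matrix ι ι R) i j)) with hN
  let e : {x : ι // x ∈ s} ⊕ {x : ι // x ∉ s} ≃ ι := Equiv.sumCompl (· ∈ s)
  rw [← Matrix.det_submatrix_equiv_self e N]
  have : N.submatrix e e = Matrix.fromBlocks
      (M.submatrix (fun i : {x : ι // x ∈ s} => (i : ι)) (fun j : {x : ι // x ∈ s} => (j : ι)))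
      (M.submatrix (fun i : {x : ι // x ∈ s} => (i : ι)) (fun j : {x : ι // x ∉ s} => (j : ι)))
      0 1 := by
    ext i j
    cases i with
    | inl i =>
      cases j with
      | inl j => simp [N, e, Finset.piecewise_eq_of_mem _ _ _ i.2]
      | inr j => simp [N, e, Finset.piecewise_eq_of_mem _ _ _ i.2]
    | inr i =>
      cases j with
      | inl j =>
        have hij : (i : ι) ≠ (j : ι) := fun h => i.2 (h ▸ j.2)
        simp [N, e, Finset.piecewise_eq_of_notMem _ _ _ i.2, Matrix.one_apply, hij]
      | inr j =>
        simp [N, e, Finset.piecewise_eq_of_notMem _ _ _ i.2, Matrix.one_apply,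
          Subtype.ext_iff]
  rw [this, Matrix.det_fromBlocks_zero₂₁, Matrix.det_one, mul_one]

lemma aux2 (M : Matrix ι ι R) :
    (1 + M).det = ∑ s : Finset ι,
      (M.submatrix (fun i : {x : ι // x ∈ s} => (i : ι))
        (fun j : {x : ι // x ∈ s} => (j : ι))).det := by
  classical
  have h := (Matrix.detRowAlternating (R := R) (n := ι)).toMultilinearMap.map_add_univ
    (fun i j => M i j) (fun i j => (1 : Matrix ι ι R) i j)
  have harg : ((fun i j => M i j) + fun i j => (1 : Matrix ι ι R) i j)
      = fun i => (1 + M) i := by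
    funext i j
    simp [Matrix.add_apply, add_comm]
  rw [harg] at h
  have h1 : (1 + M).det
      = (Matrix.detRowAlternating (R := R) (n := ι)) (fun i => (1 + M) i) := rfl
  rw [h1]
  exact h.trans (Finset.sum_congr rfl fun s _ => aux1 M s)

lemma aux3 (M : Matrix ι ι R) (k : ℕ) :
    ((1 + (X : R[X]) • M.map C).det).coeff k
      = ∑ Λ ∈ Finset.univ.powersetCard k,
          (M.submatrix (fun i : {x : ι // x ∈ Λ} => (i : ι))
            (fun j : {x : ι // x ∈ Λ} => (j : ι))).det := by
  classical
  rw [aux2]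
  have hterm : ∀ s : Finset ι,
      (((X : R[X]) • M.map C).submatrix (fun i : {x : ι // x ∈ s} => (i : ι))
        (fun j : {x : ι // x ∈ s} => (j : ι))).det
      = C ((M.submatrix (fun i : {x : ι // x ∈ s} => (i : ι))
            (fun j : {x : ι // x ∈ s} => (j : ι))).det) * X ^ s.card := by
    intro s
    have : ((X : R[X]) • M.map C).submatrix (fun i : {x : ι // x ∈ s} => (i : ι))
        (fun j : {x : ι // x ∈ s} => (j : ι))
        = (X : R[X]) • ((M.submatrix (fun i : {x : ι // x ∈ s} => (i : ι))
            (fun j : {x : ι // x ∈ s} => (j : ι))).map C) := by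
      ext i j
      simp [Matrix.submatrix_apply, Matrix.smul_apply, Matrix.map_apply]
    rw [this, Matrix.det_smul, Fintype.card_coe, ← RingHom.mapMatrix_apply,
      ← RingHom.map_det, mul_comm]
  rw [Polynomial.finset_sum_coeff]
  simp only [hterm]
  simp only [Polynomial.coeff_C_mul_X_pow]
  rw [show (Finset.univ : Finset ι).powersetCard k
      = (Finset.univ : Finset (Finset ι)).filter (fun s : Finset ι => s.card = k) by
    rw [← Finset.powerset_univ, Finset.powersetCard_eq_filter]]
  rw [Finset.sum_filter]
  apply Finset.sum_congr rfl
  intro s _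
  by_cases h : s.card = k
  · simp [h]
  · rw [if_neg h, if_neg (fun hh => h hh.symm)]

lemma aux4 {N : ℕ} (F : Matrix (Fin N) (Fin N) ℂ) (hF : F.IsHermitian) :
    (1 + (X : ℂ[X]) • F.map C).det
      = (1 + (X : ℂ[X]) • (Matrix.diagonal
          (fun i => (hF.eigenvalues i : ℂ))).map C).det := by
  classical
  set U : Matrix (Fin N) (Fin N) ℂ := (hF.eigenvectorUnitary : Matrix (Fin N) (Fin N) ℂ) with hU
  have hUV : U * star U = 1 := (Matrix.mem_unitaryGroup_iff).mp (hF.eigenvectorUnitary).2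
  have hDD : Matrix.diagonal (RCLike.ofReal ∘ hF.eigenvalues)
      = Matrix.diagonal (fun i => (hF.eigenvalues i : ℂ)) := rfl
  have hspec : F = U * Matrix.diagonal (fun i => (hF.eigenvalues i : ℂ)) * star U := by
    rw [← hDD]; exact hF.spectral_theorem
  set D : Matrix (Fin N) (Fin N) ℂ := Matrix.diagonal (fun i => (hF.eigenvalues i : ℂ)) with hD
  have h1 : U.map C * (star U).map C = (1 : Matrix (Fin N) (Fin N) ℂ[X]) := by
    rw [← Matrix.map_mul, hUV, Matrix.map_one C C.map_zero C.map_one]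
  have hexp : U.map C * (1 + (X : ℂ[X]) • D.map C) * (star U).map C
      = 1 + (X : ℂ[X]) • (U.map C * D.map C * (star U).map C) := by
    rw [Matrix.mul_add, Matrix.add_mul, Matrix.mul_one, h1, mul_smul_comm, smul_mul_assoc]
  have key : 1 + (X : ℂ[X]) • F.map C
      = (U.map C) * (1 + (X : ℂ[X]) • D.map C) * ((star U).map C) := by
    rw [hexp, hspec, Matrix.map_mul, Matrix.map_mul]
  rw [key, Matrix.det_mul, Matrix.det_mul, mul_comm, ← mul_assoc, mul_comm (((star U).map C).det),
    ← Matrix.det_mul, h1, Matrix.det_one, one_mul]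

lemma aux5 {N : ℕ} (F : Matrix (Fin N) (Fin N) ℂ) (hF : F.IsHermitian) (k : ℕ) :
    ∑ Λ ∈ Finset.univ.powersetCard k,
        (F.submatrix (fun i : {x : Fin N // x ∈ Λ} => (i : Fin N))
          (fun j : {x : Fin N // x ∈ Λ} => (j : Fin N))).det
      = ∑ Λ ∈ Finset.univ.powersetCard k, ∏ i ∈ Λ, (hF.eigenvalues i : ℂ) := by
  classical
  rw [← aux3, aux4 F hF, aux3]
  apply Finset.sum_congr rfl
  intro Λ _
  rw [Matrix.submatrix_diagonal _ _ Subtype.val_injective, Matrix.det_diagonal]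
  exact Finset.prod_coe_sort Λ fun i => (hF.eigenvalues i : ℂ)

lemma count_aux {α : Type*} [DecidableEq α] (T : Finset α) (i : α) (hi : i ∈ T)
    (k : ℕ) (hk : 1 ≤ k) :
    ((T.powersetCard k).filter (fun Λ => i ∈ Λ)).card = (T.card - 1).choose (k - 1) := by
  classical
  have key : ((T.powersetCard k).filter (fun Λ => i ∈ Λ)).card
      = ((T.erase i).powersetCard (k - 1)).card := by
    refine Finset.card_bij' (fun Λ _ => Λ.erase i) (fun Λ _ => insert i Λ)
      ?_ ?_ ?_ ?_
    · intro Λ hΛ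
      simp only [Finset.mem_filter, Finset.mem_powersetCard] at hΛ
      obtain ⟨⟨hsub, hcard⟩, hmem⟩ := hΛ
      exact Finset.mem_powersetCard.mpr ⟨Finset.erase_subset_erase _ hsub,
        by rw [Finset.card_erase_of_mem hmem, hcard]⟩
    · intro Λ hΛ
      rw [Finset.mem_powersetCard] at hΛ
      obtain ⟨hsub, hcard⟩ := hΛ
      have hiΛ : i ∉ Λ := fun h => (Finset.notMem_erase i T) (hsub h)
      simp only [Finset.mem_filter, Finset.mem_powersetCard]
      refine ⟨⟨Finset.insert_subset hi ((hsub.trans (Finset.erase_subset _ _))), ?_⟩,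
        Finset.mem_insert_self _ _⟩
      rw [Finset.card_insert_of_notMem hiΛ, hcard]
      omega
    · intro Λ hΛ
      simp only [Finset.mem_filter] at hΛ
      exact Finset.insert_erase hΛ.2
    · intro Λ hΛ
      rw [Finset.mem_powersetCard] at hΛ
      exact Finset.erase_insert (fun h => (Finset.notMem_erase i T) (hΛ.1 h))
  rw [key, Finset.card_powersetCard, Finset.card_erase_of_mem hi]

lemma prod_prod_aux {α : Type*} [DecidableEq α] (T : Finset α) (k : ℕ) (hk : 1 ≤ k)
    (f : α → ℝ) :
    ∏ Λ ∈ T.powersetCard k, ∏ i ∈ Λ, f i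
      = ∏ i ∈ T, f i ^ ((T.card - 1).choose (k - 1)) := by
  classical
  have step : ∀ Λ ∈ T.powersetCard k, ∏ i ∈ Λ, f i
      = ∏ i ∈ T, (if i ∈ Λ then f i else 1) := by
    intro Λ hΛ
    rw [Finset.mem_powersetCard] at hΛ
    rw [Finset.prod_ite_mem, Finset.inter_eq_right.mpr hΛ.1]
  rw [Finset.prod_congr rfl step, Finset.prod_comm]
  apply Finset.prod_congr rfl
  intro i hi
  rw [Finset.prod_ite, Finset.prod_const, Finset.prod_const_one, mul_one,
    count_aux T i hi k hk]

lemma amgm_aux {α : Type*} [DecidableEq α] (T : Finset α) (m k : ℕ) (hk : 1 ≤ k)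
    (hkm : k ≤ m) (hT : T.card = m) (f : α → ℝ) (hf : ∀ i ∈ T, 1 ≤ f i) :
    (m.choose k : ℝ) * (∏ i ∈ T, f i) ^ ((k : ℝ) / m)
      ≤ ∑ Λ ∈ T.powersetCard k, ∏ i ∈ Λ, f i := by
  classical
  have hm : 1 ≤ m := hk.trans hkm
  have hc : 0 < m.choose k := Nat.choose_pos hkm
  have hcR : (0 : ℝ) < (m.choose k : ℝ) := by exact_mod_cast hc
  have hfnn : ∀ i ∈ T, 0 ≤ f i := fun i hi => le_trans zero_le_one (hf i hi)
  have hPnn : (0 : ℝ) ≤ ∏ i ∈ T, f i := Finset.prod_nonneg hfnn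
  have hznn : ∀ Λ ∈ T.powersetCard k, 0 ≤ ∏ i ∈ Λ, f i := by
    intro Λ hΛ
    rw [Finset.mem_powersetCard] at hΛ
    exact Finset.prod_nonneg fun i hi => hfnn i (hΛ.1 hi)
  have hgm := Real.geom_mean_le_arith_mean_weighted (T.powersetCard k)
    (fun _ => 1 / (m.choose k : ℝ)) (fun Λ => ∏ i ∈ Λ, f i)
    (fun _ _ => by positivity)
    (by rw [Finset.sum_const, Finset.card_powersetCard, hT, nsmul_eq_mul]; field_simp)
    hznn
  have hkey : (((T.card - 1).choose (k - 1) : ℕ) : ℝ) * (1 / (m.choose k : ℝ))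
      = (k : ℝ) / m := by
    rw [hT]
    have h2 : m * (m - 1).choose (k - 1) = m.choose k * k := by
      obtain ⟨m', rfl⟩ : ∃ m', m = m' + 1 := ⟨m - 1, by omega⟩
      obtain ⟨k', rfl⟩ : ∃ k', k = k' + 1 := ⟨k - 1, by omega⟩
      simpa using Nat.add_one_mul_choose_eq m' k'
    have hmR : (0 : ℝ) < (m : ℝ) := by exact_mod_cast hm
    field_simp
    have := congrArg (fun x : ℕ => (x : ℝ)) h2
    push_cast at this
    linarith
  have hprod : ∏ Λ ∈ T.powersetCard k, (∏ i ∈ Λ, f i) ^ (1 / (m.choose k : ℝ))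
      = (∏ i ∈ T, f i) ^ ((k : ℝ) / m) := by
    rw [Real.finset_prod_rpow _ _ hznn, prod_prod_aux T k hk f, Finset.prod_pow,
      ← Real.rpow_natCast (∏ i ∈ T, f i), ← Real.rpow_mul hPnn, hkey]
  rw [hprod] at hgm
  calc (m.choose k : ℝ) * (∏ i ∈ T, f i) ^ ((k : ℝ) / m)
      ≤ (m.choose k : ℝ) * ∑ Λ ∈ T.powersetCard k, (1 / (m.choose k : ℝ)) * ∏ i ∈ Λ, f i :=
        by exact mul_le_mul_of_nonneg_left hgm (le_of_lt hcR)
    _ = ∑ Λ ∈ T.powersetCard k, ∏ i ∈ Λ, f i := by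
        rw [← Finset.mul_sum, ← mul_assoc]
        field_simp

/-- If `F` is Hermitian PSD with all eigenvalues `≥ 1` and at most `m` of them
exceeding `1` (with `k ≤ m ≤ n`), then the average `k × k` principal minor is
at least `(C(m,k)/C(n,k)) · (det F)^(k/m)`. -/
theorem avg_principal_minors_ge_det_rpow_of_low_rank
    (n m k : ℕ) (hkm : k ≤ m) (hmn : m ≤ n)
    (F : Matrix (Fin n) (Fin n) ℂ) (hF : F.PosSemidef)
    (heig : ∀ i, 1 ≤ hF.1.eigenvalues i)
    (hm : (Finset.univ.filter fun i => 1 < hF.1.eigenvalues i).card ≤ m) :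
    (1 / (n.choose k : ℝ)) *
        ∑ Λ ∈ Finset.univ.powersetCard k,
          ((F.submatrix (fun i : {x : Fin n // x ∈ Λ} => (i : Fin n))
            (fun j : {x : Fin n // x ∈ Λ} => (j : Fin n))).det).re ≥
      ((m.choose k : ℝ) / (n.choose k)) * (F.det).re ^ ((k : ℝ) / m) := by
  classical
  set lam : Fin n → ℝ := hF.1.eigenvalues with hlam
  by_cases hk0 : k = 0
  · subst hk0
    haveI : IsEmpty {x : Fin n // x ∈ (∅ : Finset (Fin n))} :=
      ⟨fun x => (Finset.notMem_empty _ x.2).elim⟩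
    simp [Finset.powersetCard_zero, Matrix.det_isEmpty, Real.rpow_zero]
  · have hk1 : 1 ≤ k := Nat.one_le_iff_ne_zero.mpr hk0
    obtain ⟨T, hBT, -, hTcard⟩ := Finset.exists_subsuperset_card_eq
      (Finset.subset_univ (Finset.univ.filter fun i => 1 < lam i)) hm
      (by simpa using hmn)
    have hout : ∀ i, i ∉ T → lam i = 1 := by
      intro i hi
      refine le_antisymm ?_ (heig i)
      by_contra hlt
      exact hi (hBT (Finset.mem_filter.mpr ⟨Finset.mem_univ _, not_le.mp hlt⟩))
    have hdet : (F.det).re = ∏ i ∈ T, lam i := by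
      rw [hF.1.det_eq_prod_eigenvalues, ← hlam, ← RCLike.ofReal_prod]
      show (((∏ i, lam i : ℝ)) : ℂ).re = ∏ i ∈ T, lam i
      rw [Complex.ofReal_re]
      exact (Finset.prod_subset (Finset.subset_univ T) fun i _ hi => hout i hi).symm
    have hsum : ∑ Λ ∈ Finset.univ.powersetCard k,
        ((F.submatrix (fun i : {x : Fin n // x ∈ Λ} => (i : Fin n))
          (fun j : {x : Fin n // x ∈ Λ} => (j : Fin n))).det).re
        = ∑ Λ ∈ Finset.univ.powersetCard k, ∏ i ∈ Λ, lam i := by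
      calc ∑ Λ ∈ Finset.univ.powersetCard k,
            ((F.submatrix (fun i : {x : Fin n // x ∈ Λ} => (i : Fin n))
              (fun j : {x : Fin n // x ∈ Λ} => (j : Fin n))).det).re
          = (∑ Λ ∈ Finset.univ.powersetCard k,
              (F.submatrix (fun i : {x : Fin n // x ∈ Λ} => (i : Fin n))
                (fun j : {x : Fin n // x ∈ Λ} => (j : Fin n))).det).re :=
            (Complex.re_sum _ _).symm
        _ = (∑ Λ ∈ Finset.univ.powersetCard k, ∏ i ∈ Λ, ((lam i : ℝ) : ℂ)).re := by
            rw [aux5 F hF.1 k, ← hlam]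
        _ = ∑ Λ ∈ Finset.univ.powersetCard k, ∏ i ∈ Λ, lam i := by
            rw [Complex.re_sum]
            exact Finset.sum_congr rfl fun Λ _ => by
              rw [← Complex.ofReal_prod, Complex.ofReal_re]
    have hnonneg : ∀ Λ ∈ Finset.univ.powersetCard k, Λ ∉ T.powersetCard k →
        (0 : ℝ) ≤ ∏ i ∈ Λ, lam i := fun Λ _ _ =>
      Finset.prod_nonneg fun i _ => le_trans zero_le_one (heig i)
    have hmain : (m.choose k : ℝ) * (F.det).re ^ ((k : ℝ) / m)
        ≤ ∑ Λ ∈ Finset.univ.powersetCard k, ∏ i ∈ Λ, lam i := by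
      refine le_trans ?_ (Finset.sum_le_sum_of_subset_of_nonneg
        (Finset.powersetCard_mono (Finset.subset_univ T)) hnonneg)
      rw [hdet]
      exact amgm_aux T m k hk1 hkm hTcard lam fun i _ => heig i
    have hnck : (0 : ℝ) < (n.choose k : ℝ) := by
      exact_mod_cast Nat.choose_pos (hkm.trans hmn)
    rw [ge_iff_le, hsum]
    calc ((m.choose k : ℝ) / (n.choose k)) * (F.det).re ^ ((k : ℝ) / m)
        = (1 / (n.choose k : ℝ)) * ((m.choose k : ℝ) * (F.det).re ^ ((k : ℝ) / m)) := by
          ring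
      _ ≤ (1 / (n.choose k : ℝ)) *
            ∑ Λ ∈ Finset.univ.powersetCard k, ∏ i ∈ Λ, lam i :=
          mul_le_mul_of_nonneg_left hmain (by positivity)
end

section
/- Let H be an n_r×n_t complex matrix with n_t ≤ n_r, and let k ≤ n_t. Then there exists a subset S of rows with |S| = k such that log det(I + H_S H_S†) ≥ (k/n_t) · log det(I + H H†) − log( C(n_r,k) / C(n_t,k) ), where H_S is the submatrix of H with rows in S. -/
/-!
Let `λᵢ ≥ 0` be the eigenvalues of `H Hᴴ`; since `rank (H Hᴴ) ≤ n_t`, at most `n_t` of them are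
nonzero. Comparing coefficients of the characteristic polynomial of `I + H Hᴴ`, the sum of its
`k × k` principal minors is `e_k(1 + λ)`. Keeping only the `k`-subsets of a set `J` of `n_t`
indices that contains every nonzero `λᵢ`, AM–GM gives
`e_k(1 + λ) ≥ C(n_t,k) · (∏_J (1 + λᵢ))^(k/n_t) = C(n_t,k) · det (I + H Hᴴ)^(k/n_t)`,
because each index of `J` lies in exactly `C(n_t-1,k-1)` of these subsets. Some principal minor,
i.e. some `det (I + H_S H_Sᴴ)` with `|S| = k`, is at least the average `e_k(1 + λ) / C(n_r,k)`;
taking logarithms gives the bound.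
-/

open Matrix Polynomial Finset
open scoped ComplexOrder

theorem Matrix.sum_det_submatrix_powersetCard_eq_of_charpoly_eq {R n : Type*} [CommRing R]
    [Fintype n] [DecidableEq n] {A : Matrix n n R} {μ : n → R}
    (hA : A.charpoly = ∏ i, (X - C (μ i))) {k : ℕ} (hk : k ≤ Fintype.card n) :
    ∑ s ∈ univ.powersetCard k, (A.submatrix (Subtype.val : s → n) Subtype.val).det =
      ∑ s ∈ univ.powersetCard k, ∏ i ∈ s, μ i := by
  have hcoeff : (∏ i, (X - C (μ i))).coeff (Fintype.card n - k) =
      (-1) ^ k * ∑ s ∈ univ.powersetCard k, ∏ i ∈ s, μ i := by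
    simp_rw [sub_eq_add_neg, ← map_neg C]
    rw [prod_X_add_C_coeff _ _ (by simp), card_univ, Nat.sub_sub_self hk, mul_sum]
    refine sum_congr rfl fun s hs => ?_
    rw [prod_neg, (mem_powersetCard.1 hs).2]
  have h := A.charpoly_coeff_eq_sum_minors k hk
  rw [hA, hcoeff] at h
  exact ((isUnit_one.neg.pow k).mul_left_cancel h).symm

theorem Matrix.det_eq_prod_of_charpoly_eq {R n : Type*} [CommRing R]
    [Fintype n] [DecidableEq n] {A : Matrix n n R} {μ : n → R}
    (hA : A.charpoly = ∏ i, (X - C (μ i))) : A.det = ∏ i, μ i := by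
  rw [det_eq_sign_charpoly_coeff, hA, coeff_zero_eq_eval_zero, eval_prod]
  simp [prod_neg, ← mul_assoc, ← mul_pow]

theorem Matrix.IsHermitian.charpoly_one_add {𝕜 n : Type*} [RCLike 𝕜] [Fintype n] [DecidableEq n]
    {A : Matrix n n 𝕜} (hA : A.IsHermitian) :
    (1 + A).charpoly = ∏ i, (X - C ((1 + hA.eigenvalues i : ℝ) : 𝕜)) := by
  rw [← hA.charpoly_cfc_eq, cfc_const_add (1 : ℝ) (fun x => x) A, cfc_id' ℝ A, map_one]

theorem Finset.prod_powersetCard_prod {α M : Type*} [DecidableEq α] [CommMonoid M]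
    (J : Finset α) (f : α → M) {k : ℕ} (hk : 0 < k) :
    ∏ T ∈ J.powersetCard k, ∏ i ∈ T, f i = (∏ i ∈ J, f i) ^ (#J - 1).choose (k - 1) := by
  rw [prod_comm' (t' := J) (s' := fun i => (J.powersetCard k).filter ({i} ⊆ ·)), ← prod_pow]
  · refine prod_congr rfl fun i hi => ?_
    rw [prod_const, card_filter_powersetCard_subset _ _ _ (singleton_subset_iff.2 hi)
      ((card_singleton i).trans_le hk), card_singleton]
  · intro T i
    simp only [mem_powersetCard, mem_filter, singleton_subset_iff]
    exact ⟨fun h => ⟨h, h.1.1 h.2⟩, fun h => h.1⟩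

theorem Nat.cast_choose_pred_div_choose {K : Type*} [Field K] [CharZero K] {n k : ℕ} (hk : 0 < k)
    (hkn : k ≤ n) : ((n - 1).choose (k - 1) : K) / n.choose k = k / n := by
  obtain ⟨m, rfl⟩ : ∃ m, n = m + 1 := ⟨n - 1, by omega⟩
  obtain ⟨j, rfl⟩ : ∃ j, k = j + 1 := ⟨k - 1, by omega⟩
  rw [div_eq_div_iff (Nat.cast_ne_zero.2 (Nat.choose_pos hkn).ne')
    (Nat.cast_ne_zero.2 m.succ_ne_zero), Nat.add_sub_cancel, Nat.add_sub_cancel]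
  exact_mod_cast (mul_comm _ _).trans ((Nat.add_one_mul_choose_eq m j).trans (mul_comm _ _))

-- AM–GM for the `C(#J, k)` products `∏_T f`, whose product is `(∏_J f) ^ C(#J-1, k-1)`.
theorem Finset.choose_mul_prod_rpow_le_sum_powersetCard_prod {α : Type*} [DecidableEq α]
    (J : Finset α) {f : α → ℝ} (hf : ∀ i ∈ J, 0 ≤ f i) {k : ℕ} (hk : k ≤ #J) :
    ((#J).choose k : ℝ) * (∏ i ∈ J, f i) ^ ((k : ℝ) / #J) ≤
      ∑ T ∈ J.powersetCard k, ∏ i ∈ T, f i := by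
  rcases k.eq_zero_or_pos with rfl | hk0
  · simp
  set N : ℝ := Nat.cast ((#J).choose k)
  have hN : 0 < N := Nat.cast_pos.2 (Nat.choose_pos hk)
  have hprod : ∀ T ∈ J.powersetCard k, 0 ≤ ∏ i ∈ T, f i := fun T hT =>
    prod_nonneg fun i hi => hf i ((mem_powersetCard.1 hT).1 hi)
  have hgm := Real.geom_mean_le_arith_mean_weighted (J.powersetCard k) (fun _ => N⁻¹)
    (fun T => ∏ i ∈ T, f i) (fun _ _ => by positivity)
    (by rw [sum_const, card_powersetCard, nsmul_eq_mul]; exact mul_inv_cancel₀ hN.ne') hprod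
  rw [Real.finsetProd_rpow _ _ hprod, prod_powersetCard_prod J f hk0, ← Real.rpow_natCast,
    ← Real.rpow_mul (prod_nonneg hf), ← div_eq_mul_inv, Nat.cast_choose_pred_div_choose hk0 hk,
    ← mul_sum] at hgm
  calc N * (∏ i ∈ J, f i) ^ ((k : ℝ) / #J)
      ≤ N * (N⁻¹ * ∑ T ∈ J.powersetCard k, ∏ i ∈ T, f i) := by gcongr
    _ = ∑ T ∈ J.powersetCard k, ∏ i ∈ T, f i := by field_simp

theorem Finset.choose_mul_prod_rpow_le_sum_powersetCard_prod_of_card_ne_one_le {ι : Type*}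
    [Fintype ι] [DecidableEq ι] {f : ι → ℝ} (hf : ∀ i, 0 ≤ f i) {m k : ℕ}
    (hsupp : #{i | f i ≠ 1} ≤ m) (hm : m ≤ Fintype.card ι) (hk : k ≤ m) :
    (m.choose k : ℝ) * (∏ i, f i) ^ ((k : ℝ) / m) ≤ ∑ S ∈ univ.powersetCard k, ∏ i ∈ S, f i := by
  obtain ⟨J, hJ, rfl⟩ := exists_superset_card_eq hsupp hm
  have hprod : ∏ i ∈ J, f i = ∏ i, f i :=
    prod_subset (subset_univ J) fun i _ hi => by_contra fun h => hi (hJ (by simpa using h))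
  rw [← hprod]
  exact (choose_mul_prod_rpow_le_sum_powersetCard_prod J (fun i _ => hf i) hk).trans
    (sum_le_sum_of_subset_of_nonneg (powersetCard_mono (subset_univ J))
      fun T _ _ => prod_nonneg fun i _ => hf i)

theorem Matrix.choose_mul_det_rpow_le_sum_det_submatrix {𝕜 ι κ : Type*} [RCLike 𝕜] [Fintype ι]
    [DecidableEq ι] [Fintype κ] (H : Matrix ι κ 𝕜) (hκι : Fintype.card κ ≤ Fintype.card ι)
    {k : ℕ} (hk : k ≤ Fintype.card κ) :
    ((Fintype.card κ).choose k : ℝ) * RCLike.re (1 + H * Hᴴ).det ^ ((k : ℝ) / Fintype.card κ) ≤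
      ∑ S ∈ univ.powersetCard k,
        RCLike.re ((1 + H * Hᴴ).submatrix (Subtype.val : S → ι) Subtype.val).det := by
  have hM := isHermitian_mul_conjTranspose_self H
  have hchar := hM.charpoly_one_add
  rw [det_eq_prod_of_charpoly_eq hchar, ← map_sum,
    sum_det_submatrix_powersetCard_eq_of_charpoly_eq hchar (hk.trans hκι)]
  simp only [← RCLike.ofReal_prod, ← RCLike.ofReal_sum, RCLike.ofReal_re]
  refine choose_mul_prod_rpow_le_sum_powersetCard_prod_of_card_ne_one_le
    (fun i => by linarith [eigenvalues_self_mul_conjTranspose_nonneg H i]) ?_ hκι hk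
  calc #{i | 1 + hM.eigenvalues i ≠ 1} = (H * Hᴴ).rank := by
        rw [hM.rank_eq_card_non_zero_eigs, Fintype.card_subtype]; simp
    _ ≤ Fintype.card κ := (rank_mul_le_left H Hᴴ).trans H.rank_le_card_width

theorem Finset.exists_div_card_le_of_le_sum {ι K : Type*} [Field K] [LinearOrder K]
    [IsStrictOrderedRing K] {s : Finset ι} (hs : s.Nonempty) {f : ι → K} {a : K}
    (h : a ≤ ∑ i ∈ s, f i) : ∃ i ∈ s, a / #s ≤ f i :=
  exists_le_of_le_expect hs (by rw [expect_eq_sum_div_card]; gcongr)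

theorem Matrix.submatrix_one_add_mul_conjTranspose {α l m n : Type*} [Semiring α] [StarRing α]
    [Fintype n] [DecidableEq l] [DecidableEq m] (H : Matrix m n α) {e : l → m}
    (he : Function.Injective e) :
    (1 + H * Hᴴ).submatrix e e = 1 + H.submatrix e id * (H.submatrix e id)ᴴ := by
  rw [submatrix_add, Pi.add_apply, Pi.add_apply, submatrix_one _ he, conjTranspose_submatrix,
    submatrix_mul _ _ _ _ _ Function.bijective_id]

theorem Real.mul_log_sub_log_div_le_log {D b c t x : ℝ} (hD : 0 < D) (hb : 0 < b) (hc : 0 < c)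
    (h : c * D ^ t / b ≤ x) : t * log D - log (b / c) ≤ log x := by
  calc t * log D - log (b / c) = log (c * D ^ t / b) := by
        rw [log_div (by positivity) hb.ne', log_mul hc.ne' (by positivity), log_rpow hD,
          log_div hb.ne' hc.ne']
        ring
    _ ≤ log x := log_le_log (by positivity) h

/-- Receiver selection, `k ≤ n_t ≤ n_r`: some choice of `k` rows `S` satisfies
`log det (I + H_S H_Sᴴ) ≥ (k/n_t)·log det (I + H Hᴴ) − log(C(n_r,k)/C(n_t,k))`. -/
theorem exists_row_subset_capacity_bound_small_k
    (nr nt k : ℕ) (hnt : nt ≤ nr) (hk : k ≤ nt)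
    (H : Matrix (Fin nr) (Fin nt) ℂ) :
    ∃ S : Finset (Fin nr), S.card = k ∧
      Real.log ((1 +
          (H.submatrix (fun i : {x : Fin nr // x ∈ S} => (i : Fin nr)) id) *
          (H.submatrix (fun i : {x : Fin nr // x ∈ S} => (i : Fin nr)) id)ᴴ).det).re ≥
        ((k : ℝ) / nt) * Real.log ((1 + H * Hᴴ).det).re -
          Real.log ((nr.choose k : ℝ) / (nt.choose k)) := by
  have hbound := H.choose_mul_det_rpow_le_sum_det_submatrix (by simpa using hnt) (by simpa using hk)
  obtain ⟨S, hS, hSge⟩ := exists_div_card_le_of_le_sum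
    (powersetCard_nonempty.2 (by simpa using hk.trans hnt)) hbound
  simp only [card_powersetCard, card_univ, Fintype.card_fin, RCLike.re_to_complex] at hSge
  refine ⟨S, (mem_powersetCard.1 hS).2, ?_⟩
  rw [← submatrix_one_add_mul_conjTranspose H Subtype.val_injective]
  have hdet : 0 < ((1 + H * Hᴴ).det).re :=
    (Complex.pos_iff.1 (PosDef.one.add_posSemidef H.posSemidef_self_mul_conjTranspose).det_pos).1
  exact Real.mul_log_sub_log_div_le_log hdet (Nat.cast_pos.2 (Nat.choose_pos (hk.trans hnt)))
    (Nat.cast_pos.2 (Nat.choose_pos hk)) hSge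
end

section
/- Let H be an n_r×n_t complex matrix with n_t ≤ n_r, and let n_t ≤ k ≤ n_r. Then there exists a subset S of rows with |S| = k such that log det(I + H_S H_S†) ≥ log det(I + H H†) − log( C(n_r,k) / C(n_r−n_t, k−n_t) ). -/
/-!
Expand `det (1 + H Hᴴ)` as the sum of the principal minors `det (H_T H_Tᴴ)` over all row sets
`T`; these minors are nonnegative, equal `1` at `T = ∅` and vanish for `|T| > n_t` because
`H_T H_Tᴴ` has rank at most `n_t`. The same expansion of `det (1 + H_S H_Sᴴ)` runs over `T ⊆ S`.
Summing over all `k`-sets `S`, the minor of `T` is counted `C(n_r - |T|, k - |T|)` times, which is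
at least `C(n_r - n_t, k - n_t)` whenever `|T| ≤ n_t`; hence the average of `det (1 + H_S H_Sᴴ)`
is at least `C(n_r - n_t, k - n_t) / C(n_r, k) · det (1 + H Hᴴ)`, and some `S` reaches the average.
-/

open Matrix Finset

theorem Nat.choose_sub_le_choose_sub {n k t a : ℕ} (hat : a ≤ t) (htk : t ≤ k) (hkn : k ≤ n) :
    (n - t).choose (k - t) ≤ (n - a).choose (k - a) := by
  rw [← Nat.choose_symm (by omega : k - t ≤ n - t), ← Nat.choose_symm (by omega : k - a ≤ n - a),
    show n - t - (k - t) = n - k by omega, show n - a - (k - a) = n - k by omega]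
  exact Nat.choose_le_choose _ (by omega)

namespace Finset

variable {α : Type*} [Fintype α] [DecidableEq α]

theorem sum_powersetCard_sum_powerset {M : Type*} [AddCommMonoid M] (f : Finset α → M) (k : ℕ) :
    ∑ S ∈ univ.powersetCard k, ∑ T ∈ S.powerset, f T =
      ∑ T, #{S ∈ univ.powersetCard k | T ⊆ S} • f T := by
  rw [sum_comm' (t' := univ) (s' := fun T => {S ∈ univ.powersetCard k | T ⊆ S})
    (fun S T => by simp [and_comm])]
  simp only [sum_const]

theorem exists_card_eq_choose_mul_sum_le {f : Finset α → ℝ} {t k : ℕ} (hf : ∀ T, 0 ≤ f T)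
    (hf_zero : ∀ T, t < #T → f T = 0) (htk : t ≤ k) (hk : k ≤ Fintype.card α) :
    ∃ S, #S = k ∧ ((Fintype.card α - t).choose (k - t) : ℝ) * ∑ T, f T ≤
      (Fintype.card α).choose k * ∑ T ∈ S.powerset, f T := by
  set N := Fintype.card α
  have hcount (T : Finset α) : ((N - t).choose (k - t) : ℝ) * f T ≤
      #{S ∈ univ.powersetCard k | T ⊆ S} • f T := by
    rcases lt_or_ge t #T with hT | hT
    · simp [hf_zero T hT]
    rw [card_filter_powersetCard_subset T univ k (subset_univ T) (hT.trans htk), nsmul_eq_mul]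
    gcongr
    · exact hf T
    · exact Nat.choose_sub_le_choose_sub hT htk hk
  have hsum : ((N - t).choose (k - t) : ℝ) * ∑ T, f T ≤
      ∑ S ∈ univ.powersetCard k, ∑ T ∈ S.powerset, f T := by
    rw [sum_powersetCard_sum_powerset, mul_sum]
    exact sum_le_sum fun T _ => hcount T
  have hne : (univ.powersetCard k : Finset (Finset α)).Nonempty :=
    powersetCard_nonempty.2 (by rwa [card_univ])
  obtain ⟨S, hS, hle⟩ := exists_le_of_sum_le hne
    (f := fun _ => ((N - t).choose (k - t) : ℝ) * ∑ T, f T)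
    (g := fun S => (N.choose k : ℝ) * ∑ T ∈ S.powerset, f T) (by
      rw [sum_const, card_powersetCard, card_univ, nsmul_eq_mul, ← mul_sum]
      gcongr)
  exact ⟨S, (mem_powersetCard.1 hS).2, hle⟩

end Finset

namespace Matrix

section PrincipalMinors

variable {R : Type*} [CommRing R] {n : Type*} [DecidableEq n]

theorem det_one_add_eq_sum_det_submatrix [Fintype n] (M : Matrix n n R) :
    (1 + M).det = ∑ s : Finset n, (M.submatrix ((↑) : s → n) (↑)).det := by
  calc (1 + M).det = detRowAlternating (M.row + (1 : Matrix n n R).row) := by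
        rw [add_comm]; rfl
    _ = ∑ s : Finset n, (of (s.piecewise M.row (row 1))).det := detRowAlternating.map_add_univ _ _
    _ = _ := sum_congr rfl fun s _ => det_piecewise_one_eq_submatrix_det M s

theorem det_one_add_submatrix_eq_sum_powerset (M : Matrix n n R) (S : Finset n) :
    (1 + M.submatrix ((↑) : S → n) (↑)).det =
      ∑ T ∈ S.powerset, (M.submatrix ((↑) : T → n) (↑)).det := by
  rw [det_one_add_eq_sum_det_submatrix]
  refine Finset.sum_nbij' (fun T => T.map (Function.Embedding.subtype (· ∈ S)))
    (fun T => T.subtype (· ∈ S)) (fun T _ => ?_) (by simp) (fun T _ => ?_) (fun T hT => ?_)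
    (fun T _ => ?_)
  · refine Finset.mem_powerset.2 fun x hx => ?_
    obtain ⟨y, -, rfl⟩ := Finset.mem_map.1 hx
    exact y.2
  · ext x
    simp
  · simpa using Finset.subtype_map_of_mem (fun x hx => Finset.mem_powerset.1 hT hx)
  · rw [submatrix_submatrix, ← det_submatrix_equiv_self (T.equivMap _)]
    rfl

end PrincipalMinors

section Gram

variable {l m n : Type*} [Fintype n]

theorem submatrix_mul_conjTranspose_self {α : Type*} [Semiring α] [StarRing α]
    (A : Matrix m n α) (r : l → m) :
    (A * Aᴴ).submatrix r r = A.submatrix r id * (A.submatrix r id)ᴴ := by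
  rw [conjTranspose_submatrix]
  exact submatrix_mul _ _ _ _ _ Function.bijective_id

theorem det_mul_eq_zero_of_card_lt {K : Type*} [Field K] [Fintype m] [DecidableEq m]
    (A : Matrix m n K) (B : Matrix n m K) (h : Fintype.card n < Fintype.card m) :
    (A * B).det = 0 := by
  by_contra hdet
  have hrank := rank_of_isUnit _ ((isUnit_iff_isUnit_det _).2 (Ne.isUnit hdet))
  have := (rank_mul_le_left A B).trans (rank_le_card_width A)
  omega

open scoped ComplexOrder in
theorem re_det_submatrix_mul_conjTranspose_self_nonneg [Fintype l] [DecidableEq l]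
    (A : Matrix m n ℂ) (r : l → m) : 0 ≤ ((A * Aᴴ).submatrix r r).det.re := by
  rw [submatrix_mul_conjTranspose_self]
  exact (Complex.nonneg_iff.1 (posSemidef_self_mul_conjTranspose _).det_nonneg).1

theorem det_submatrix_mul_conjTranspose_self_eq_zero [Fintype l] [DecidableEq l]
    (A : Matrix m n ℂ) (r : l → m) (h : Fintype.card n < Fintype.card l) :
    ((A * Aᴴ).submatrix r r).det = 0 := by
  rw [submatrix_mul_conjTranspose_self]
  exact det_mul_eq_zero_of_card_lt _ _ h

end Gram

end Matrix

theorem Real.log_sub_log_div_le_log {a b c d : ℝ} (ha : 0 < a) (hc : 0 < c) (hd : 0 < d)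
    (h : d * a ≤ c * b) : Real.log a - Real.log (c / d) ≤ Real.log b := by
  rw [← Real.log_div ha.ne' (div_pos hc hd).ne']
  apply Real.log_le_log (by positivity)
  rw [div_div_eq_mul_div, div_le_iff₀ hc]
  linarith

theorem exists_row_subset_capacity_bound_large_k_general
    (nr nt k : ℕ) (hk1 : nt ≤ k) (hk2 : k ≤ nr)
    (H : Matrix (Fin nr) (Fin nt) ℂ) :
    ∃ S : Finset (Fin nr), S.card = k ∧
      Real.log ((1 +
          (H.submatrix (fun i : {x : Fin nr // x ∈ S} => (i : Fin nr)) id) *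
          (H.submatrix (fun i : {x : Fin nr // x ∈ S} => (i : Fin nr)) id)ᴴ).det).re ≥
        Real.log ((1 + H * Hᴴ).det).re -
          Real.log ((nr.choose k : ℝ) / ((nr - nt).choose (k - nt))) := by
  set minor : Finset (Fin nr) → ℝ := fun T => ((H * Hᴴ).submatrix ((↑) : T → Fin nr) (↑)).det.re
  have hminor_nonneg (T : Finset (Fin nr)) : 0 ≤ minor T :=
    re_det_submatrix_mul_conjTranspose_self_nonneg H _
  have hminor_zero (T : Finset (Fin nr)) (hT : nt < #T) : minor T = 0 := by
    have hcard : Fintype.card (Fin nt) < Fintype.card T := by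
      rwa [Fintype.card_coe, Fintype.card_fin]
    simp only [minor]
    rw [det_submatrix_mul_conjTranspose_self_eq_zero H _ hcard, Complex.zero_re]
  obtain ⟨S, hSk, hS⟩ := exists_card_eq_choose_mul_sum_le hminor_nonneg hminor_zero hk1
    (by rwa [Fintype.card_fin])
  simp only [Fintype.card_fin] at hS
  refine ⟨S, hSk, ?_⟩
  rw [← submatrix_mul_conjTranspose_self, det_one_add_submatrix_eq_sum_powerset, Complex.re_sum,
    det_one_add_eq_sum_det_submatrix, Complex.re_sum]
  have hminor_empty : minor ∅ = 1 := by simp [minor]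
  have hD : 1 ≤ ∑ T, minor T :=
    hminor_empty ▸ single_le_sum (fun T _ => hminor_nonneg T) (mem_univ ∅)
  exact Real.log_sub_log_div_le_log (by linarith) (by exact_mod_cast Nat.choose_pos hk2)
    (by exact_mod_cast Nat.choose_pos (by omega)) hS

/-- Receiver selection, `n_t ≤ k ≤ n_r`: some choice of `k` rows `S` satisfies
`log det (I + H_S H_Sᴴ) ≥ log det (I + H Hᴴ) − log(C(n_r,k)/C(n_r−n_t,k−n_t))`. -/
theorem exists_row_subset_capacity_bound_large_k
    (nr nt k : ℕ) (hnt : nt ≤ nr) (hk1 : nt ≤ k) (hk2 : k ≤ nr)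
    (H : Matrix (Fin nr) (Fin nt) ℂ) :
    ∃ S : Finset (Fin nr), S.card = k ∧
      Real.log ((1 +
          (H.submatrix (fun i : {x : Fin nr // x ∈ S} => (i : Fin nr)) id) *
          (H.submatrix (fun i : {x : Fin nr // x ∈ S} => (i : Fin nr)) id)ᴴ).det).re ≥
        Real.log ((1 + H * Hᴴ).det).re -
          Real.log ((nr.choose k : ℝ) / ((nr - nt).choose (k - nt))) :=
  exists_row_subset_capacity_bound_large_k_general nr nt k hk1 hk2 H
end

section
/- Let x_1,…,x_n be positive reals and 1 ≤ k ≤ n. Then (1/C(n,k)) · Σ_{J⊆[n],|J|=k} Π_{j∈J} x_j ≥ (Π_{i=1}^n x_i)^{k/n}, i.e., the normalized k-th elementary symmetric mean is at least the geometric mean raised to k (Maclaurin-type inequality). -/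
open Finset

lemma count_mem_powersetCard (n k : ℕ) (hk : 1 ≤ k) (hkn : k ≤ n) (i : Fin n) :
    ((Finset.univ.powersetCard k).filter (fun J => i ∈ J)).card = (n-1).choose (k-1) := by
  have : ((Finset.univ.powersetCard k).filter (fun J => i ∈ J)).card
      = ((Finset.univ.erase i).powersetCard (k-1)).card := by
    apply Finset.card_bij (fun J _ => J.erase i)
    · intro J hJ
      simp only [mem_filter, mem_powersetCard] at hJ
      simp only [mem_powersetCard]
      constructor
      · intro a ha
        simp only [mem_erase] at ha ⊢
        exact ⟨ha.1, mem_univ _⟩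
      · rw [Finset.card_erase_of_mem hJ.2, hJ.1.2]
    · intro J₁ h₁ J₂ h₂ h
      simp only [mem_filter] at h₁ h₂
      rw [← Finset.insert_erase h₁.2, ← Finset.insert_erase h₂.2, h]
    · intro J hJ
      simp only [mem_powersetCard] at hJ
      refine ⟨insert i J, ?_, ?_⟩
      · simp only [mem_filter, mem_powersetCard]
        refine ⟨⟨subset_univ _, ?_⟩, mem_insert_self _ _⟩
        rw [Finset.card_insert_of_notMem, hJ.2, Nat.sub_add_cancel hk]
        intro h; exact (mem_erase.1 (hJ.1 h)).1 rfl
      · rw [Finset.erase_insert]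
        intro h; exact (mem_erase.1 (hJ.1 h)).1 rfl
  rw [this, Finset.card_powersetCard, Finset.card_erase_of_mem (mem_univ _), card_univ,
    Fintype.card_fin]

/-- Maclaurin-type inequality: for positive reals `x_1, …, x_n` and
`1 ≤ k ≤ n`, the normalized `k`-th elementary symmetric mean is at least
`(∏ x_i)^(k/n)`. -/
theorem esymm_mean_ge_geom_mean_rpow
    (n k : ℕ) (hk1 : 1 ≤ k) (hk2 : k ≤ n) (x : Fin n → ℝ)
    (hx : ∀ i, 0 < x i) :
    (1 / (n.choose k : ℝ)) *
        ∑ J ∈ Finset.univ.powersetCard k, ∏ j ∈ J, x j ≥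
      (∏ i : Fin n, x i) ^ ((k : ℝ) / n) := by
  have hn0 : 0 < n := lt_of_lt_of_le hk1 hk2
  have hC : (0:ℝ) < (n.choose k : ℝ) := by exact_mod_cast Nat.choose_pos hk2
  set P := (Finset.univ : Finset (Fin n)).powersetCard k with hP
  have hcard : P.card = n.choose k := by
    rw [hP, Finset.card_powersetCard, card_univ, Fintype.card_fin]
  -- product identity
  have hprod : ∏ J ∈ P, ∏ j ∈ J, x j = ∏ i : Fin n, x i ^ (n-1).choose (k-1) := by
    have h1 : ∀ J ∈ P, ∏ j ∈ J, x j = ∏ j : Fin n, (if j ∈ J then x j else 1) := by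
      intro J hJ
      rw [← Finset.prod_filter, Finset.filter_mem_eq_inter, Finset.univ_inter]
    rw [Finset.prod_congr rfl h1, Finset.prod_comm]
    refine Finset.prod_congr rfl fun i _ => ?_
    rw [← Finset.prod_filter, Finset.prod_const, count_mem_powersetCard n k hk1 hk2 i]
  -- exponent identity
  have hexp : ((n-1).choose (k-1) : ℝ) / (n.choose k : ℝ) = (k:ℝ)/n := by
    have h := Nat.add_one_mul_choose_eq (n-1) (k-1)
    rw [Nat.sub_add_cancel hn0, Nat.sub_add_cancel hk1] at h
    have h' : (n:ℝ) * ((n-1).choose (k-1)) = (n.choose k) * k := by exact_mod_cast h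
    field_simp
    linarith [h']
  -- AM-GM
  have hAM := Real.geom_mean_le_arith_mean_weighted P (fun _ => 1 / (n.choose k : ℝ))
    (fun J => ∏ j ∈ J, x j)
    (fun J _ => by positivity)
    (by rw [Finset.sum_const, hcard, nsmul_eq_mul]; field_simp)
    (fun J _ => Finset.prod_nonneg fun j _ => (hx j).le)
  rw [ge_iff_le]
  calc (∏ i : Fin n, x i) ^ ((k : ℝ) / n)
      = ∏ J ∈ P, (∏ j ∈ J, x j) ^ (1 / (n.choose k : ℝ)) := by
        rw [Real.finset_prod_rpow P _ (fun J _ => Finset.prod_nonneg fun j _ => (hx j).le),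
          hprod, Finset.prod_pow, ← Real.rpow_natCast (∏ i : Fin n, x i),
          ← Real.rpow_mul (Finset.prod_nonneg fun i _ => (hx i).le)]
        congr 1
        rw [mul_one_div]
        exact hexp.symm
    _ ≤ ∑ J ∈ P, (1 / (n.choose k : ℝ)) * ∏ j ∈ J, x j := hAM
    _ = (1 / (n.choose k : ℝ)) * ∑ J ∈ P, ∏ j ∈ J, x j := by rw [Finset.mul_sum]
end

section
/- Let F be an n×n Hermitian positive definite matrix with all eigenvalues ≥ 1, and let k ≤ n. Then there exists Λ ⊆ [n] with |Λ| = k such that det(F_Λ) ≥ (det F)^{k/n} / C(n,k). -/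
open Matrix
open scoped ComplexOrder

/-! The sum of the `k × k` principal minors of a matrix is, up to sign, a coefficient of its
characteristic polynomial, so for Hermitian `F` it is the elementary symmetric function
`e_k(λ)` of the eigenvalues. Averaging `log λ` over all `k`-subsets gives a `k`-subset `S` with
`∏_{i ∈ S} λ_i ≥ (det F)^(k/n)`, hence `e_k(λ) ≥ (det F)^(k/n)`, and the largest of the
`C(n,k)` minors is at least their average. -/

open Finset

namespace Matrix

variable {n R : Type*} [Fintype n] [DecidableEq n] [CommRing R]

theorem sum_principal_minors_eq_of_charpoly_eq {A B : Matrix n n R}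
    (h : A.charpoly = B.charpoly) (k : ℕ) :
    ∑ s ∈ univ.powersetCard k, (A.submatrix (Subtype.val : s → n) Subtype.val).det =
      ∑ s ∈ univ.powersetCard k, (B.submatrix (Subtype.val : s → n) Subtype.val).det := by
  by_cases hk : k ≤ Fintype.card n
  · have hcoeff := congrArg (·.coeff (Fintype.card n - k)) h
    simp only [charpoly_coeff_eq_sum_minors _ k hk] at hcoeff
    exact ((isUnit_neg_one (α := R)).pow k).mul_left_cancel hcoeff
  · rw [powersetCard_eq_empty.2 (by simpa using hk), sum_empty, sum_empty]

theorem sum_principal_minors_diagonal (d : n → R) (k : ℕ) :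
    ∑ s ∈ univ.powersetCard k, ((diagonal d).submatrix (Subtype.val : s → n) Subtype.val).det =
      ∑ s ∈ univ.powersetCard k, ∏ i ∈ s, d i := by
  refine sum_congr rfl fun s _ => ?_
  rw [submatrix_diagonal _ _ Subtype.val_injective, det_diagonal]
  exact prod_coe_sort s d

theorem IsHermitian.sum_principal_minors_eq_sum_prod_eigenvalues {𝕜 : Type*} [RCLike 𝕜]
    {A : Matrix n n 𝕜} (hA : A.IsHermitian) (k : ℕ) :
    ∑ s ∈ univ.powersetCard k, (A.submatrix (Subtype.val : s → n) Subtype.val).det =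
      ∑ s ∈ univ.powersetCard k, ∏ i ∈ s, (hA.eigenvalues i : 𝕜) := by
  rw [sum_principal_minors_eq_of_charpoly_eq (B := diagonal fun i => (hA.eigenvalues i : 𝕜))
    (by rw [hA.charpoly_eq, charpoly_diagonal]), sum_principal_minors_diagonal]

end Matrix

namespace Finset

variable {ι : Type*} [Fintype ι] [DecidableEq ι]

theorem sum_powersetCard_sum {M : Type*} [AddCommMonoid M] (f : ι → M) {k : ℕ} (hk : 0 < k) :
    ∑ s ∈ univ.powersetCard k, ∑ i ∈ s, f i =
      (Fintype.card ι - 1).choose (k - 1) • ∑ i, f i := by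
  rw [sum_comm' (t' := univ) (s' := fun i => (univ.powersetCard k).filter ({i} ⊆ ·))
    (by simp), smul_sum]
  refine sum_congr rfl fun i _ => ?_
  rw [sum_const, card_filter_powersetCard_subset _ _ _ (subset_univ _)
    (by rw [card_singleton]; exact hk), card_singleton, card_univ]

theorem exists_mem_powersetCard_mul_sum_le_sum (f : ι → ℝ) {k : ℕ} (hk : k ≤ Fintype.card ι) :
    ∃ s ∈ univ.powersetCard k, (k / Fintype.card ι : ℝ) * ∑ i, f i ≤ ∑ i ∈ s, f i := by
  cases k with
  | zero => exact ⟨∅, by simp, by simp⟩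
  | succ j =>
    obtain ⟨m, hm⟩ : ∃ m, Fintype.card ι = m + 1 := Nat.exists_eq_add_one.2 (by omega)
    refine exists_le_of_sum_le (powersetCard_nonempty.2 (by simpa using hk)) (le_of_eq ?_)
    have hchoose : ((m + 1).choose (j + 1) : ℝ) * (j + 1) = (m + 1) * m.choose j := by
      exact_mod_cast (Nat.add_one_mul_choose_eq m j).symm
    rw [sum_const, card_powersetCard, card_univ, sum_powersetCard_sum f j.succ_pos, hm]
    simp only [nsmul_eq_mul, Nat.add_sub_cancel]
    push_cast
    field_simp
    linear_combination (∑ i, f i) * hchoose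

end Finset

theorem Real.exists_mem_powersetCard_prod_rpow_le_prod {ι : Type*} [Fintype ι] [DecidableEq ι]
    (x : ι → ℝ) (hx : ∀ i, 0 < x i) {k : ℕ} (hk : k ≤ Fintype.card ι) :
    ∃ s ∈ univ.powersetCard k, (∏ i, x i) ^ (k / Fintype.card ι : ℝ) ≤ ∏ i ∈ s, x i := by
  obtain ⟨s, hs, hlog⟩ := exists_mem_powersetCard_mul_sum_le_sum (fun i => Real.log (x i)) hk
  refine ⟨s, hs, ?_⟩
  rw [Real.rpow_def_of_pos (prod_pos fun i _ => hx i), Real.log_prod fun i _ => (hx i).ne',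
    ← prod_congr rfl fun i _ => Real.exp_log (hx i), ← Real.exp_sum, mul_comm]
  exact Real.exp_le_exp.2 hlog

theorem Matrix.PosDef.det_rpow_le_sum_principal_minors {n 𝕜 : Type*} [Fintype n] [DecidableEq n]
    [RCLike 𝕜] {A : Matrix n n 𝕜} (hA : A.PosDef) {k : ℕ} (hk : k ≤ Fintype.card n) :
    RCLike.re A.det ^ (k / Fintype.card n : ℝ) ≤
      ∑ s ∈ univ.powersetCard k, RCLike.re (A.submatrix (Subtype.val : s → n) Subtype.val).det := by
  obtain ⟨s, hs, hprod⟩ :=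
    Real.exists_mem_powersetCard_prod_rpow_le_prod _ hA.eigenvalues_pos hk
  rw [hA.1.det_eq_prod_eigenvalues, ← RCLike.ofReal_prod, RCLike.ofReal_re, ← map_sum,
    hA.1.sum_principal_minors_eq_sum_prod_eigenvalues]
  simp_rw [← RCLike.ofReal_prod, ← RCLike.ofReal_sum, RCLike.ofReal_re]
  exact hprod.trans (single_le_sum (f := fun t => ∏ i ∈ t, hA.1.eigenvalues i)
    (fun t _ => prod_nonneg fun i _ => (hA.eigenvalues_pos i).le) hs)

theorem exists_principal_minor_ge_det_rpow_div_choose_general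
    (n k : ℕ) (hk : k ≤ n) (F : Matrix (Fin n) (Fin n) ℂ)
    (hF : F.PosDef) :
    ∃ Λ : Finset (Fin n), Λ.card = k ∧
      ((F.submatrix (fun i : {x : Fin n // x ∈ Λ} => (i : Fin n))
          (fun j : {x : Fin n // x ∈ Λ} => (j : Fin n))).det).re ≥
        (F.det).re ^ ((k : ℝ) / n) / (n.choose k : ℝ) := by
  have hsum := hF.det_rpow_le_sum_principal_minors (k := k) (by rwa [Fintype.card_fin])
  rw [Fintype.card_fin] at hsum
  have hchoose : (0 : ℝ) < n.choose k := by exact_mod_cast Nat.choose_pos hk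
  obtain ⟨Λ, hΛ, hle⟩ := exists_le_of_sum_le (s := (univ : Finset (Fin n)).powersetCard k)
    (powersetCard_nonempty.2 (by simpa using hk))
    (f := fun _ => F.det.re ^ (k / n : ℝ) / n.choose k)
    (g := fun Λ => (F.submatrix (Subtype.val : Λ → Fin n) Subtype.val).det.re) (by
      rwa [sum_const, card_powersetCard, card_univ, Fintype.card_fin, nsmul_eq_mul,
        mul_div_cancel₀ _ hchoose.ne'])
  exact ⟨Λ, (mem_powersetCard.1 hΛ).2, hle⟩

/-- If `F` is Hermitian positive definite with all eigenvalues `≥ 1` and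
`k ≤ n`, some `k × k` principal submatrix has determinant at least
`(det F)^(k/n) / C(n,k)`. -/
theorem exists_principal_minor_ge_det_rpow_div_choose
    (n k : ℕ) (hk : k ≤ n) (F : Matrix (Fin n) (Fin n) ℂ)
    (hF : F.PosDef) (heig : ∀ i, 1 ≤ hF.1.eigenvalues i) :
    ∃ Λ : Finset (Fin n), Λ.card = k ∧
      ((F.submatrix (fun i : {x : Fin n // x ∈ Λ} => (i : Fin n))
          (fun j : {x : Fin n // x ∈ Λ} => (j : Fin n))).det).re ≥
        (F.det).re ^ ((k : ℝ) / n) / (n.choose k : ℝ) :=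
  exists_principal_minor_ge_det_rpow_div_choose_general n k hk F hF
end
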